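/- Let 𝒢 = (V, A) be an ordering relations graph. Every complete prime p of ℒ[𝒢] = (H, ⊆) is of the form p = [v] for some v ∈ V; in particular, the empty set is not a complete prime of (H, ⊆). -/

import Mathlib

open Relation

/-- A subset `W` of vertices is conflict-free w.r.t. the arc relation `A`. -/
def ConflictFree {V : Type*} (A : V → V → Prop) (W : Set V) : Prop :=
  ∀ v₁ ∈ W, ∀ v₂ ∈ W, ¬ A v₁ v₂ ∨ ¬ A v₂ v₁

/-- A subset `W` of vertices is left-closed w.r.t. the arc relation `A`. -/
def LeftClosed {V : Type*} (A : V → V → Prop) (W : Set V) : Prop :=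
  ∀ v₁ ∈ W, ∀ v₂ : V, A v₂ v₁ → ¬ A v₁ v₂ → v₂ ∈ W

/-- `H` : the set of left-closed conflict-free subsets of vertices; ordered by
inclusion (via the subtype order) this is the poset `ℒ[𝒢]`. -/
def OrgH {V : Type*} (A : V → V → Prop) : Set (Set V) :=
  {W | LeftClosed A W ∧ ConflictFree A W}

/-- `[v] = {v' | (v',v) ∈ B*}` where `B = {(x,y) ∈ A | (y,x) ∉ A}`. -/
def primeOf {V : Type*} (A : V → V → Prop) (v : V) : Set V :=
  {v' | ReflTransGen (fun x y => A x y ∧ ¬ A y x) v' v}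

/-- Two elements of a poset are consistent iff they have a common upper bound. -/
def Consistent {D : Type*} [PartialOrder D] (x y : D) : Prop :=
  ∃ z : D, x ≤ z ∧ y ≤ z

/-- A subset of a poset is pairwise consistent. -/
def PairwiseConsistent {D : Type*} [PartialOrder D] (X : Set D) : Prop :=
  ∀ x ∈ X, ∀ y ∈ X, Consistent x y

/-- A poset is coherent iff every pairwise consistent subset has a least upper bound. -/
def Coherent (D : Type*) [PartialOrder D] : Prop :=
  ∀ X : Set D, PairwiseConsistent X → ∃ l : D, IsLUB X l

/-- An element `p` is a complete prime iff whenever a subset has a least upper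
bound above `p`, then `p` lies below some member of the subset. -/
def CompletePrime {D : Type*} [PartialOrder D] (p : D) : Prop :=
  ∀ (X : Set D) (l : D), IsLUB X l → p ≤ l → ∃ y ∈ X, p ≤ y

/-- A poset is prime algebraic iff its complete primes form a denumerable set and
every element is the least upper bound of the complete primes below it. -/
def PrimeAlgebraic (D : Type*) [PartialOrder D] : Prop :=
  {p : D | CompletePrime p}.Countable ∧
  ∀ x : D, IsLUB {p : D | CompletePrime p ∧ p ≤ x} x

/- Every `W ∈ H` is the union, hence the supremum in `ℒ[𝒢]`, of the principal sets `[v]`, `v ∈ W`;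
a complete prime must lie below one of them, and then equals it. The empty set is the least
element of `ℒ[𝒢]`, i.e. the supremum of the empty family, so it is not a complete prime. -/

section Poset

variable {D : Type*} [PartialOrder D]

theorem CompletePrime.not_isBot {p : D} (hp : CompletePrime p) : ¬ IsBot p := by
  intro hbot
  obtain ⟨y, hy, -⟩ := hp ∅ p (isLUB_empty_iff.mpr hbot) le_rfl
  exact hy

end Poset

section OrderingRelations

variable {V : Type*} (A : V → V → Prop)

theorem leftClosed_primeOf (v : V) : LeftClosed A (primeOf A v) :=
  fun _ h₁ _ h₂ h₃ => ReflTransGen.head ⟨h₂, h₃⟩ h₁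

variable {A}

theorem ConflictFree.mono {W W' : Set V} (hW' : ConflictFree A W') (h : W ⊆ W') :
    ConflictFree A W :=
  fun v₁ h₁ v₂ h₂ => hW' v₁ (h h₁) v₂ (h h₂)

theorem LeftClosed.primeOf_subset {W : Set V} (hW : LeftClosed A W) {v : V} (hv : v ∈ W) :
    primeOf A v ⊆ W := by
  intro x hx
  induction hx using ReflTransGen.head_induction_on with
  | refl => exact hv
  | head hac _ hc => exact hW _ hc _ hac.1 hac.2

theorem primeOf_mem_orgH {W : Set V} (hW : W ∈ OrgH A) {v : V} (hv : v ∈ W) :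
    primeOf A v ∈ OrgH A :=
  ⟨leftClosed_primeOf A v, hW.2.mono (hW.1.primeOf_subset hv)⟩

def primesBelow (W : ↥(OrgH A)) : Set ↥(OrgH A) :=
  {q | ∃ v ∈ (W : Set V), (q : Set V) = primeOf A v}

theorem isLUB_primesBelow (W : ↥(OrgH A)) : IsLUB (primesBelow W) W := by
  constructor
  · rintro q ⟨v, hv, hq⟩
    show (q : Set V) ⊆ W
    exact hq ▸ W.2.1.primeOf_subset hv
  · intro z hz x hx
    exact hz (⟨x, hx, rfl⟩ : ⟨primeOf A x, primeOf_mem_orgH W.2 hx⟩ ∈ primesBelow W)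
      ReflTransGen.refl

theorem CompletePrime.exists_eq_primeOf {p : ↥(OrgH A)} (hp : CompletePrime p) :
    ∃ v : V, (p : Set V) = primeOf A v := by
  obtain ⟨q, ⟨v, hv, hqv⟩, hpq⟩ := hp _ p (isLUB_primesBelow p) le_rfl
  exact ⟨v, subset_antisymm (hqv ▸ hpq) (p.2.1.primeOf_subset hv)⟩

theorem isBot_empty_orgH (h : (∅ : Set V) ∈ OrgH A) : IsBot (⟨∅, h⟩ : ↥(OrgH A)) :=
  fun _ => Set.empty_subset _

end OrderingRelations

theorem stmt5_general {V : Type*} (A : V → V → Prop) :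
    (∀ p : ↥(OrgH A), CompletePrime p → ∃ v : V, (p : Set V) = primeOf A v) ∧
    ∀ h : (∅ : Set V) ∈ OrgH A, ¬ CompletePrime (⟨∅, h⟩ : ↥(OrgH A)) :=
  ⟨fun _ hp => hp.exists_eq_primeOf, fun h hp => hp.not_isBot (isBot_empty_orgH h)⟩

/-- Every complete prime `p` of `ℒ[𝒢] = (H, ⊆)` is of the form
`[v]` for some vertex `v`; in particular, the empty set is not a complete prime. -/
theorem stmt5 {V : Type*} [Finite V] (A : V → V → Prop) :
    (∀ p : ↥(OrgH A), CompletePrime p → ∃ v : V, (p : Set V) = primeOf A v) ∧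
    ∀ h : (∅ : Set V) ∈ OrgH A, ¬ CompletePrime (⟨∅, h⟩ : ↥(OrgH A)) :=
  stmt5_general A
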